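/- Let G be a finite group and p a prime with p² ∤ |G|. If H, J, J' are subgroups of G such that O^p(H), O^p(J), O^p(J') are pairwise conjugate in G, then at least two of H, J, J' are conjugate in G. (Equivalently: every equivalence class of the relation on conjugacy classes of subgroups given by 'O^p-subgroups are conjugate' has cardinality at most 2.) -/

import Mathlib

/-- Two subgroups of `G` are conjugate if one is `g H g⁻¹` for some `g ∈ G`. -/
def IsConjSubgroup {G : Type*} [Group G] (H J : Subgroup G) : Prop :=
  ∃ g : G, Subgroup.map (MulAut.conj g).toMonoidHom H = J

/-- `O^p(H)`: the smallest normal subgroup `K ⊴ H` with `H/K` a `p`-group, regarded as a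
subgroup of `G`. -/
def Op (p : ℕ) {G : Type*} [Group G] (H : Subgroup G) : Subgroup G :=
  (sInf {K : Subgroup H | ∃ _ : K.Normal, IsPGroup p (H ⧸ K)}).map H.subtype

/-!
After conjugating, `O^p(H) = O^p(J) = O^p(J') = N`. Each of the three subgroups `X` contains `N`
with `p`-power index, and as `p² ∤ |G|` that index is `1` or `p`; so two of them have the same
order. Index `1` means `X = N`. Index `p` forces `p ∤ |N|` and `X = N ⊔ P` with `|P| = p`; such
`P` is a Sylow subgroup of `G` lying in `N_G(N)`, and two of them are conjugate by an element of
`N_G(N)`, which fixes `N`.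
-/

open Subgroup Pointwise

theorem IsPGroup.prod {p : ℕ} {A B : Type*} [Group A] [Group B] (hA : IsPGroup p A)
    (hB : IsPGroup p B) : IsPGroup p (A × B) := by
  rintro ⟨a, b⟩
  obtain ⟨m, hm⟩ := hA a
  obtain ⟨n, hn⟩ := hB b
  refine ⟨m + n, Prod.ext ?_ ?_⟩
  · simp only [Prod.pow_fst, pow_add, pow_mul, hm, one_pow, Prod.fst_one]
  · simp only [Prod.pow_snd, pow_add, pow_mul', hn, one_pow, Prod.snd_one]

section PQuotient

variable (p : ℕ) (A : Type*) [Group A]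

def pQuotientSubgroups : Set (Subgroup A) :=
  {K | ∃ _ : K.Normal, IsPGroup p (A ⧸ K)}

theorem top_mem_pQuotientSubgroups : ⊤ ∈ pQuotientSubgroups p A :=
  have := QuotientGroup.subsingleton_quotient_top (G := A)
  ⟨inferInstance, .of_subsingleton p _⟩

variable {p A}

theorem infClosed_pQuotientSubgroups : InfClosed (pQuotientSubgroups p A) := by
  rintro K₁ ⟨hK₁, hp₁⟩ K₂ ⟨hK₂, hp₂⟩
  let φ : A →* (A ⧸ K₁) × (A ⧸ K₂) := (QuotientGroup.mk' K₁).prod (QuotientGroup.mk' K₂)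
  have hker : φ.ker = K₁ ⊓ K₂ := by
    rw [MonoidHom.ker_prod, QuotientGroup.ker_mk', QuotientGroup.ker_mk']
  refine ⟨hker ▸ φ.normal_ker, ?_⟩
  exact ((hp₁.prod hp₂).of_injective _ (QuotientGroup.kerLift_injective φ)).of_equiv
    (QuotientGroup.quotientMulEquivOfEq hker)

theorem sInf_mem_pQuotientSubgroups [Finite A] :
    sInf (pQuotientSubgroups p A) ∈ pQuotientSubgroups p A :=
  infClosed_pQuotientSubgroups.sInf_mem (Set.toFinite _) (top_mem_pQuotientSubgroups p A)
    subset_rfl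

end PQuotient

section PQuotientMap

variable {p : ℕ} {A B : Type*} [Group A] [Group B]

theorem map_mem_pQuotientSubgroups (e : A ≃* B) {K : Subgroup A}
    (hK : K ∈ pQuotientSubgroups p A) : K.map (e : A →* B) ∈ pQuotientSubgroups p B := by
  obtain ⟨hn, hq⟩ := hK
  have hn' := hn.map (e : A →* B) e.surjective
  exact ⟨hn', hq.of_equiv (QuotientGroup.congr K _ e rfl)⟩

theorem image_mapSubgroup_pQuotientSubgroups (e : A ≃* B) :
    e.mapSubgroup '' pQuotientSubgroups p A = pQuotientSubgroups p B := by
  refine subset_antisymm ?_ fun K hK => ?_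
  · rintro _ ⟨K, hK, rfl⟩
    exact map_mem_pQuotientSubgroups e hK
  · refine ⟨K.map (e.symm : B →* A), map_mem_pQuotientSubgroups e.symm hK, ?_⟩
    simp [MulEquiv.mapSubgroup_apply, Subgroup.map_map]

theorem sInf_pQuotientSubgroups_map (e : A ≃* B) :
    sInf (pQuotientSubgroups p B) = (sInf (pQuotientSubgroups p A)).map (e : A →* B) := by
  rw [← image_mapSubgroup_pQuotientSubgroups e, sInf_image, ← e.mapSubgroup.map_sInf]
  rfl

end PQuotientMap

section Op

variable {p : ℕ} {G G' : Type*} [Group G] [Group G']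

theorem Op_def (H : Subgroup G) : Op p H = (sInf (pQuotientSubgroups p H)).map H.subtype := rfl

theorem Op_map_of_injective {f : G →* G'} (hf : Function.Injective f) (H : Subgroup G) :
    Op p (H.map f) = (Op p H).map f := by
  rw [Op_def, Op_def, sInf_pQuotientSubgroups_map (H.equivMapOfInjective f hf), map_map,
    map_map]
  rfl

theorem Op_conj_smul (g : G) (H : Subgroup G) :
    Op p (MulAut.conj g • H) = MulAut.conj g • Op p H :=
  Op_map_of_injective (MulAut.conj g).injective H

theorem Op_le (H : Subgroup G) : Op p H ≤ H := map_subtype_le _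

theorem le_normalizer_Op (H : Subgroup G) : H ≤ normalizer (Op p H : Set G) := by
  have : (sInf (pQuotientSubgroups p H)).Normal :=
    ⟨fun n hn h => mem_sInf.2 fun K hK => hK.1.conj_mem n (mem_sInf.1 hn K hK) h⟩
  have : ((Op p H).subgroupOf H).Normal := by
    rwa [Op_def, ← comap_subtype, comap_map_eq_self_of_injective H.subtype_injective]
  exact le_normalizer_of_normal_subgroupOf (Op_le H)

theorem exists_card_eq_card_Op_mul_pow (hp : p.Prime) [Finite G] (H : Subgroup G) :
    ∃ k, Nat.card H = Nat.card (Op p H) * p ^ k := by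
  have := Fact.mk hp
  obtain ⟨_, hq⟩ := sInf_mem_pQuotientSubgroups (p := p) (A := H)
  obtain ⟨k, hk⟩ := IsPGroup.iff_card.1 hq
  refine ⟨k, ?_⟩
  rw [card_eq_card_quotient_mul_card_subgroup (sInf (pQuotientSubgroups p H)), hk, mul_comm,
    Op_def, card_map_of_injective H.subtype_injective]

end Op

section Conj

variable {G : Type*} [Group G] {H J K : Subgroup G}

theorem isConjSubgroup_iff : IsConjSubgroup H J ↔ ∃ g : G, MulAut.conj g • H = J := Iff.rfl

theorem IsConjSubgroup.refl (H : Subgroup G) : IsConjSubgroup H H :=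
  isConjSubgroup_iff.mpr ⟨1, by rw [map_one, one_smul]⟩

theorem IsConjSubgroup.symm (h : IsConjSubgroup H J) : IsConjSubgroup J H := by
  obtain ⟨g, rfl⟩ := isConjSubgroup_iff.mp h
  exact isConjSubgroup_iff.mpr ⟨g⁻¹, by rw [map_inv, inv_smul_smul]⟩

theorem IsConjSubgroup.trans (h₁ : IsConjSubgroup H J) (h₂ : IsConjSubgroup J K) :
    IsConjSubgroup H K := by
  obtain ⟨g, rfl⟩ := isConjSubgroup_iff.mp h₁
  obtain ⟨g', rfl⟩ := isConjSubgroup_iff.mp h₂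
  exact isConjSubgroup_iff.mpr ⟨g' * g, by rw [map_mul, mul_smul]⟩

end Conj

section Sylow

variable {p : ℕ} {G : Type*} [Group G] [Finite G]

theorem Sylow.exists_mem_conj_smul_eq [Fact p.Prime] {M : Subgroup G} {P Q : Sylow p G}
    (hP : (P : Subgroup G) ≤ M) (hQ : (Q : Subgroup G) ≤ M) :
    ∃ m ∈ M, MulAut.conj m • (P : Subgroup G) = Q := by
  obtain ⟨m, hm⟩ := MulAction.exists_smul_eq M (P.subtype hP) (Q.subtype hQ)
  rw [Sylow.smul_subtype] at hm
  exact ⟨m, m.2, congrArg Sylow.toSubgroup (Sylow.subtype_injective hm)⟩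

theorem isConjSubgroup_sup_sylow [Fact p.Prime] (N : Subgroup G) {P Q : Sylow p G}
    (hP : (P : Subgroup G) ≤ normalizer (N : Set G))
    (hQ : (Q : Subgroup G) ≤ normalizer (N : Set G)) :
    IsConjSubgroup (N ⊔ P) (N ⊔ Q) := by
  obtain ⟨m, hm, hPQ⟩ := Sylow.exists_mem_conj_smul_eq hP hQ
  refine isConjSubgroup_iff.mpr ⟨m, ?_⟩
  rw [smul_sup, hPQ]
  congr 1
  exact mem_normalizer_iff_map_conj_eq.mp hm

theorem sup_eq_of_card_eq_mul {N P A : Subgroup G} (hNA : N ≤ A) (hPA : P ≤ A)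
    (hcop : (Nat.card N).Coprime (Nat.card P)) (hA : Nat.card A = Nat.card N * Nat.card P) :
    N ⊔ P = A := by
  refine eq_of_le_of_card_ge (sup_le hNA hPA) (hA ▸ Nat.le_of_dvd Nat.card_pos ?_)
  exact hcop.mul_dvd_of_dvd_of_dvd (card_dvd_of_le le_sup_left) (card_dvd_of_le le_sup_right)

theorem exists_sylow_le_sup_eq (hp : p.Prime) (hG : ¬ p ^ 2 ∣ Nat.card G) {N A : Subgroup G}
    (hNA : N ≤ A) (hA : Nat.card A = Nat.card N * p) :
    ∃ P : Sylow p G, (P : Subgroup G) ≤ A ∧ N ⊔ P = A := by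
  have := Fact.mk hp
  have hAG : Nat.card N * p ∣ Nat.card G := hA ▸ A.card_subgroup_dvd_card
  obtain ⟨x, hx⟩ := exists_prime_orderOf_dvd_card' (G := A) p (hA ▸ dvd_mul_left p _)
  have hcard : Nat.card (zpowers (x : G)) = p := by rw [Nat.card_zpowers, orderOf_coe, hx]
  have hindex : ¬ p ∣ (zpowers (x : G)).index := fun h =>
    hG (by rw [← card_mul_index (zpowers (x : G)), hcard, sq]; exact mul_dvd_mul_left p h)
  have hN : ¬ p ∣ Nat.card N := fun h => hG (sq p ▸ (mul_dvd_mul_right h p).trans hAG)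
  let P : Sylow p G := (IsPGroup.of_card (n := 1) (by rw [hcard, pow_one])).toSylow hindex
  have hPcard : Nat.card (P : Subgroup G) = p := hcard
  have hPA : (P : Subgroup G) ≤ A := zpowers_le.mpr x.2
  refine ⟨P, hPA, sup_eq_of_card_eq_mul hNA hPA ?_ (by rw [hA, hPcard])⟩
  rw [hPcard]
  exact (hp.coprime_iff_not_dvd.mpr hN).symm

end Sylow

section Main

variable {p : ℕ} {G : Type*} [Group G]

theorem exists_isConjSubgroup_Op_eq {H J : Subgroup G} (h : IsConjSubgroup (Op p H) (Op p J)) :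
    ∃ A, IsConjSubgroup H A ∧ Op p A = Op p J := by
  obtain ⟨g, hg⟩ := isConjSubgroup_iff.mp h
  exact ⟨MulAut.conj g • H, isConjSubgroup_iff.mpr ⟨g, rfl⟩, (Op_conj_smul g H).trans hg⟩

variable [Finite G]

theorem exists_card_eq_card_Op_mul_pow_le_one (hp : p.Prime) (hG : ¬ p ^ 2 ∣ Nat.card G)
    (H : Subgroup G) : ∃ k ≤ 1, Nat.card H = Nat.card (Op p H) * p ^ k := by
  obtain ⟨k, hk⟩ := exists_card_eq_card_Op_mul_pow hp H
  refine ⟨k, ?_, hk⟩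
  by_contra! h
  exact hG ((pow_dvd_pow p h).trans ((dvd_mul_left _ _).trans (hk ▸ H.card_subgroup_dvd_card)))

theorem isConjSubgroup_of_Op_eq (hp : p.Prime) (hG : ¬ p ^ 2 ∣ Nat.card G) {A B : Subgroup G}
    (hOp : Op p A = Op p B) {k : ℕ} (hk : k ≤ 1) (hA : Nat.card A = Nat.card (Op p A) * p ^ k)
    (hB : Nat.card B = Nat.card (Op p B) * p ^ k) : IsConjSubgroup A B := by
  interval_cases k
  · rw [← eq_of_le_of_card_ge (Op_le A) (by rw [hA, pow_zero, mul_one]),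
      ← eq_of_le_of_card_ge (Op_le B) (by rw [hB, pow_zero, mul_one]), hOp]
    exact .refl _
  · have := Fact.mk hp
    rw [pow_one] at hA hB
    obtain ⟨P, hPA, hA⟩ := exists_sylow_le_sup_eq hp hG (Op_le A) hA
    obtain ⟨Q, hQB, hB⟩ := exists_sylow_le_sup_eq hp hG (Op_le B) hB
    have hPN : (P : Subgroup G) ≤ normalizer (Op p B : Set G) :=
      hOp ▸ hPA.trans (le_normalizer_Op A)
    rw [← hA, ← hB, hOp]
    exact isConjSubgroup_sup_sylow _ hPN (hQB.trans (le_normalizer_Op B))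

end Main

theorem stmt_14_general (G : Type) [Group G] [Finite G] (p : ℕ) (hp : p.Prime)
    (hG : ¬ p ^ 2 ∣ Nat.card G) (H J J' : Subgroup G)
    (h1 : IsConjSubgroup (Op p H) (Op p J)) (h2 : IsConjSubgroup (Op p J) (Op p J')) :
    IsConjSubgroup H J ∨ IsConjSubgroup H J' ∨ IsConjSubgroup J J' := by
  obtain ⟨A, hHA, hA⟩ := exists_isConjSubgroup_Op_eq h1
  obtain ⟨C, hJ'C, hC⟩ := exists_isConjSubgroup_Op_eq h2.symm
  obtain ⟨a, ha, hAcard⟩ := exists_card_eq_card_Op_mul_pow_le_one hp hG A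
  obtain ⟨j, hj, hJcard⟩ := exists_card_eq_card_Op_mul_pow_le_one hp hG J
  obtain ⟨c, hc, hCcard⟩ := exists_card_eq_card_Op_mul_pow_le_one hp hG C
  rcases (by omega : a = j ∨ a = c ∨ j = c) with rfl | rfl | rfl
  · exact .inl (hHA.trans (isConjSubgroup_of_Op_eq hp hG hA ha hAcard hJcard))
  · have hAC := isConjSubgroup_of_Op_eq hp hG (hA.trans hC.symm) ha hAcard hCcard
    exact .inr (.inl (hHA.trans (hAC.trans hJ'C.symm)))
  · exact .inr (.inr ((isConjSubgroup_of_Op_eq hp hG hC.symm hj hJcard hCcard).trans hJ'C.symm))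

/-- Let `G` be a finite group and `p` a prime with `p² ∤ |G|`.  If `H, J, J'` are subgroups of
`G` such that `O^p(H)`, `O^p(J)`, `O^p(J')` are pairwise conjugate in `G`, then at least two of
`H, J, J'` are conjugate in `G`. -/
theorem stmt_14 (G : Type) [Group G] [Finite G] (p : ℕ) (hp : p.Prime)
    (hG : ¬ p ^ 2 ∣ Nat.card G) (H J J' : Subgroup G)
    (h1 : IsConjSubgroup (Op p H) (Op p J)) (h2 : IsConjSubgroup (Op p J) (Op p J'))
    (h3 : IsConjSubgroup (Op p H) (Op p J')) :
    IsConjSubgroup H J ∨ IsConjSubgroup H J' ∨ IsConjSubgroup J J' :=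
  stmt_14_general G p hp hG H J J' h1 h2
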